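/- Let G be a group, let (λ(s))_{s∈G} be the left regular representation unitaries on ℓ²(G) (or L²(G)), and let J be a Jordan *-homomorphism on the group von Neumann algebra such that J(λ(s)) = ψ(s)λ(s) for some function ψ : G → ℂ with ψ ≠ 0. If for every pair s, t ∈ G with st ≠ ts the operators λ(st) and λ(ts) are linearly independent, then ψ is multiplicative: ψ(st) = ψ(s)ψ(t) for all s, t ∈ G. -/
import Mathlib


/-- Let `lam : G →* A` be the (left regular) representation of a group
`G` by nonzero elements (unitaries) of a complex *-algebra `A` (the group von Neumann
algebra), and `J` a Jordan *-homomorphism on `A` with `J (lam s) = ψ s • lam s` for a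
nonzero function `ψ`. If `lam (s*t)` and `lam (t*s)` are linearly independent whenever
`s*t ≠ t*s`, then `ψ` is multiplicative. -/
theorem jordan_hom_eigenfunction_multiplicative
    {G : Type*} [Group G] {A : Type*} [Ring A] [Algebra ℂ A] [StarRing A]
    (lam : G →* A) (hne : ∀ s : G, lam s ≠ 0)
    (J : A →ₗ[ℂ] A)
    (hsq : ∀ a : A, J (a * a) = J a * J a)
    (hstar : ∀ a : A, J (star a) = star (J a))
    (ψ : G → ℂ) (hψ : ψ ≠ 0)
    (hJlam : ∀ s : G, J (lam s) = ψ s • lam s)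
    (hindep : ∀ s t : G, s * t ≠ t * s →
      LinearIndependent ℂ ![lam (s * t), lam (t * s)]) :
    ∀ s t : G, ψ (s * t) = ψ s * ψ t := by
  -- Polarization: J (a*b + b*a) = J a * J b + J b * J a
  have polar : ∀ a b : A, J (a * b + b * a) = J a * J b + J b * J a := by
    intro a b
    have h : J (a * a) + (J (a * b) + J (b * a)) + J (b * b)
        = J a * J a + (J a * J b + J b * J a) + J b * J b := by
      have e : J ((a + b) * (a + b))
          = J (a * a) + (J (a * b) + J (b * a)) + J (b * b) := by
        rw [show (a + b) * (a + b) = a * a + (a * b + b * a) + b * b from by noncomm_ring]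
        simp [map_add]
      rw [← e, hsq, map_add]
      noncomm_ring
    rw [← hsq a, ← hsq b] at h
    rw [map_add]
    exact add_left_cancel (add_right_cancel h)
  intro s t
  have key : J (lam (s * t) + lam (t * s))
      = (ψ s * ψ t) • lam (s * t) + (ψ t * ψ s) • lam (t * s) := by
    have h1 : lam (s * t) + lam (t * s) = lam s * lam t + lam t * lam s := by
      rw [map_mul, map_mul]
    rw [h1, polar, hJlam s, hJlam t, smul_mul_smul_comm, smul_mul_smul_comm,
      ← map_mul, ← map_mul]
  rw [map_add, hJlam, hJlam] at key
  by_cases h : s * t = t * s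
  · rw [h] at key
    have hcancel : (ψ (t * s) + ψ (t * s) - (ψ s * ψ t + ψ t * ψ s)) • lam (t * s) = 0 := by
      rw [sub_smul, add_smul, add_smul, key]
      abel
    have hz : ψ (t * s) + ψ (t * s) - (ψ s * ψ t + ψ t * ψ s) = 0 := by
      by_contra hc
      exact hne (t * s) (by
        have := congrArg (fun x => (ψ (t * s) + ψ (t * s) - (ψ s * ψ t + ψ t * ψ s))⁻¹ • x) hcancel
        simpa [smul_smul, inv_mul_cancel₀ hc] using this)
    rw [h]
    linear_combination hz / 2
  · have hli := (hindep s t h)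
    rw [LinearIndependent.pair_iff] at hli
    have heq : (ψ (s * t) - ψ s * ψ t) • lam (s * t)
        + (ψ (t * s) - ψ t * ψ s) • lam (t * s) = 0 := by
      rw [sub_smul, sub_smul, sub_add_sub_comm, key, sub_self]
    have := (hli _ _ heq).1
    linear_combination this
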